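/- In the Cayley digraph Cay(C₁₁, {a, a⁶}), the girth equals 6 (witnessed by the directed cycle (1, a⁶, a⁷, a⁸, a⁹, a¹⁰)); consequently with threshold t = 2, d_{s,2} = 11 − s for all s > 5. -/

import Mathlib

/-!
Writing `c (i + 1) - c i ∈ {1, 6}` around a directed cycle of length `l` in `Cay(ℤ/11, {1, 6})`
and summing gives `j + 6k ≡ 0 (mod 11)` with `j + k = l`, which forces `l ≥ 6`; the cycle
`0 → 6 → 7 → 8 → 9 → 10 → 0` attains it.

With threshold `2`, a vertex activates exactly when both of its in-neighbours are active.
If `S ≠ univ` had no such vertex outside it, every vertex of the complement would have an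
in-neighbour in the complement, and following in-neighbours would produce a cycle inside it;
so when `|Sᶜ| < 6` some vertex activates, each step activates a new vertex, and `11 - s` steps
suffice. The initial segment `{0, …, s - 1}` grows by exactly one vertex per step, so `11 - s`
steps are also needed.
-/

open Finset

-- One step of the activation process: a vertex becomes active
-- if at least `t` of its in-neighbors are active.
open Classical in
noncomputable def actStep {V : Type*} [Fintype V] (E : V → V → Prop) (t : ℕ)
    (S : Finset V) : Finset V :=
  S ∪ Finset.univ.filter (fun v => t ≤ (S.filter (fun u => E u v)).card)

/-- `activeSets E t S i` is the set of active vertices after `i` steps. -/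
noncomputable def activeSets {V : Type*} [Fintype V] (E : V → V → Prop) (t : ℕ)
    (S : Finset V) (i : ℕ) : Finset V :=
  (actStep E t)^[i] S

-- The least number of steps needed to activate all vertices (`⊤` if never).
open Classical in
noncomputable def syncTime {V : Type*} [Fintype V] (E : V → V → Prop) (t : ℕ)
    (S : Finset V) : ℕ∞ :=
  if h : ∃ i, activeSets E t S i = Finset.univ then (Nat.find h : ℕ∞) else ⊤

/-- The higher diameter `d_{st}`: the max of `syncTime` over all `s`-subsets. -/
noncomputable def higherDiam {V : Type*} [Fintype V] (E : V → V → Prop) (t s : ℕ) : ℕ∞ :=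
  ⨆ S : {S : Finset V // S.card = s}, syncTime E t S.1

/-- There is a directed cycle of length `m` in the digraph `E`, all of whose
vertices lie in `T`. -/
def cycleIn {V : Type*} (E : V → V → Prop) (T : Set V) (m : ℕ) : Prop :=
  0 < m ∧ ∃ c : ZMod m → V, Function.Injective c ∧ (∀ i, c i ∈ T) ∧
    ∀ i, E (c i) (c (i + 1))

/-- There is a directed cycle of length `m` in the digraph `E`. -/
def hasCycle {V : Type*} (E : V → V → Prop) (m : ℕ) : Prop :=
  0 < m ∧ ∃ c : ZMod m → V, Function.Injective c ∧ ∀ i, E (c i) (c (i + 1))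

section Cycles

variable {V : Type*} {E : V → V → Prop} {m : ℕ}

theorem hasCycle.le_card [Fintype V] (h : hasCycle E m) : m ≤ Fintype.card V := by
  obtain ⟨hm, c, hc, -⟩ := h
  have : NeZero m := ⟨hm.ne'⟩
  simpa [ZMod.card] using Fintype.card_le_of_injective c hc

theorem hasCycle.map {W : Type*} {F : W → W → Prop} (φ : V → W) (hφ : Function.Injective φ)
    (hEF : ∀ u v, E u v → F (φ u) (φ v)) (h : hasCycle E m) : hasCycle F m := by
  obtain ⟨hm, c, hc, hE⟩ := h
  exact ⟨hm, φ ∘ c, hφ.comp hc, fun i => hEF _ _ (hE i)⟩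

theorem exists_mem_periodicPts [Finite V] [Nonempty V] (f : V → V) :
    ∃ x, x ∈ Function.periodicPts f := by
  obtain ⟨x⟩ := ‹Nonempty V›
  obtain ⟨i, j, hij, heq⟩ := Set.finite_univ.exists_lt_map_eq_of_forall_mem
    (f := fun n : ℕ => f^[n] x) (fun _ => Set.mem_univ _)
  refine ⟨f^[i] x, Function.mk_mem_periodicPts (n := j - i) (by omega) ?_⟩
  change f^[j - i] (f^[i] x) = f^[i] x
  rw [← Function.iterate_add_apply, Nat.sub_add_cancel hij.le]
  exact heq.symm

/-- Iterating a predecessor map from one of its periodic points walks a cycle backwards;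
`i ↦ f^[(-i).val] x` walks it forwards. -/
theorem exists_hasCycle_of_forall_exists_pred [Finite V] [Nonempty V] (h : ∀ v, ∃ u, E u v) :
    ∃ m, hasCycle E m := by
  choose f hf using h
  obtain ⟨x, hx⟩ := exists_mem_periodicPts f
  set p := Function.minimalPeriod f x
  have hp : 0 < p := Function.minimalPeriod_pos_of_mem_periodicPts hx
  have : NeZero p := ⟨hp.ne'⟩
  have hmod (n : ℕ) : f^[n] x = f^[(n : ZMod p).val] x := by
    rw [ZMod.val_natCast, Function.iterate_mod_minimalPeriod_eq]
  refine ⟨p, hp, fun i => f^[(-i).val] x, fun i j hij => ?_, fun i => ?_⟩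
  · exact neg_injective <| ZMod.val_injective p <|
      Function.iterate_injOn_Iio_minimalPeriod (ZMod.val_lt _) (ZMod.val_lt _) hij
  · have hstep : f (f^[(-(i + 1)).val] x) = f^[(-i).val] x := by
      rw [← Function.iterate_succ_apply' f, hmod, Nat.cast_succ, ZMod.natCast_zmod_val, neg_add,
        neg_add_cancel_right]
    show E (f^[(-i).val] x) (f^[(-(i + 1)).val] x)
    rw [← hstep]
    exact hf _

theorem exists_forall_pred_mem_of_card_compl_lt [Fintype V] [DecidableEq V] {g : ℕ}
    (hg : ∀ l, hasCycle E l → g ≤ l) {S : Finset V} (hS : Sᶜ.card < g) (hne : S ≠ univ) :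
    ∃ v ∉ S, ∀ u, E u v → u ∈ S := by
  by_contra! hpred
  have : Nonempty ↥Sᶜ := ((compl_ne_univ_iff_nonempty Sᶜ).mp (by rwa [compl_compl])).to_subtype
  obtain ⟨m, hm⟩ := exists_hasCycle_of_forall_exists_pred (E := fun u v : ↥Sᶜ => E u v)
    fun v => by
      obtain ⟨u, huv, hu⟩ := hpred v (mem_compl.mp v.2)
      exact ⟨⟨u, mem_compl.mpr hu⟩, huv⟩
  have hlen : m ≤ Sᶜ.card := by simpa [card_compl] using hm.le_card
  have := hg m (hm.map Subtype.val Subtype.val_injective fun _ _ h => h)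
  omega

end Cycles

section Activation

variable {V : Type*} [Fintype V] {E : V → V → Prop} {t : ℕ} {S : Finset V}

theorem subset_actStep : S ⊆ actStep E t S := by
  classical exact subset_union_left

theorem activeSets_succ (n : ℕ) :
    activeSets E t S (n + 1) = activeSets E t (actStep E t S) n :=
  Function.iterate_succ_apply _ _ _

theorem activeSets_mono : Monotone (activeSets E t S) :=
  monotone_nat_of_le_succ fun n => by
    change (actStep E t)^[n] S ⊆ (actStep E t)^[n + 1] S
    rw [Function.iterate_succ_apply']
    exact subset_actStep

theorem subset_activeSets (n : ℕ) : S ⊆ activeSets E t S n :=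
  activeSets_mono (Nat.zero_le n)

theorem syncTime_le_iff {n : ℕ} : syncTime E t S ≤ n ↔ activeSets E t S n = univ := by
  classical
  unfold syncTime
  split_ifs with h
  · rw [Nat.cast_le, Nat.find_le_iff]
    exact ⟨fun ⟨m, hmn, hm⟩ => univ_subset_iff.mp (hm ▸ activeSets_mono hmn),
      fun hn => ⟨n, le_rfl, hn⟩⟩
  · push Not at h
    simp [h n]

theorem higherDiam_le_iff {s n : ℕ} :
    higherDiam E t s ≤ n ↔ ∀ S : Finset V, S.card = s → activeSets E t S n = univ := by
  simp only [higherDiam, iSup_le_iff, syncTime_le_iff, Subtype.forall]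

theorem lt_higherDiam {s n : ℕ} (hS : S.card = s) (h : activeSets E t S n ≠ univ) :
    (n : ℕ∞) < higherDiam E t s :=
  not_le.mp fun hle => h (higherDiam_le_iff.mp hle S hS)

end Activation

section Cayley

variable {G : Type*} [AddCommGroup G] {a b : G}

def cayley₂ (a b : G) : G → G → Prop := fun x y => y = a + x ∨ y = b + x

theorem hasCycle.exists_nsmul_add_nsmul_eq_zero {l : ℕ} (h : hasCycle (cayley₂ a b) l) :
    ∃ j k : ℕ, j + k = l ∧ j • a + k • b = 0 := by
  classical
  obtain ⟨hl, c, -, hc⟩ := h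
  have : NeZero l := ⟨hl.ne'⟩
  let stepA : ZMod l → Prop := fun i => c (i + 1) = a + c i
  refine ⟨(univ.filter stepA).card, (univ.filter fun i => ¬ stepA i).card, ?_, ?_⟩
  · rw [card_filter_add_card_filter_not, card_univ, ZMod.card]
  have htel : ∑ i, (c (i + 1) - c i) = 0 := by
    rw [sum_sub_distrib, sub_eq_zero]
    exact Fintype.sum_equiv (Equiv.addRight 1) _ _ fun _ => rfl
  rw [← sum_filter_add_sum_filter_not _ stepA] at htel
  rw [← htel, ← sum_const, ← sum_const]
  congr 1 <;> refine sum_congr rfl fun i hi => ?_ <;> rw [mem_filter] at hi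
  · rw [hi.2, add_sub_cancel_right]
  · rw [(hc i).resolve_left hi.2, add_sub_cancel_right]

theorem cayley₂_sub_left (v : G) : cayley₂ a b (v - a) v := Or.inl (add_sub_cancel a v).symm

theorem cayley₂_sub_right (v : G) : cayley₂ a b (v - b) v := Or.inr (add_sub_cancel b v).symm

theorem cayley₂_iff {u v : G} : cayley₂ a b u v ↔ u = v - a ∨ u = v - b := by
  simp only [cayley₂, eq_sub_iff_add_eq, eq_comm (a := v), add_comm u]

variable [Fintype G]

theorem mem_actStep_cayley₂_iff (hab : a ≠ b) {S : Finset G} {v : G} :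
    v ∈ actStep (cayley₂ a b) 2 S ↔ v ∈ S ∨ (v - a ∈ S ∧ v - b ∈ S) := by
  classical
  have hin : S.filter (fun u => cayley₂ a b u v) ⊆ {v - a, v - b} := fun u hu => by
    simpa [cayley₂_iff] using (mem_filter.mp hu).2
  have hpair : ({v - a, v - b} : Finset G).card = 2 :=
    card_pair fun h => hab (sub_right_injective h)
  simp only [actStep, mem_union, mem_filter, mem_univ, true_and]
  refine or_congr_right ⟨fun h2 => ?_, fun ⟨ha, hb⟩ => ?_⟩
  · have := eq_of_subset_of_card_le hin (hpair ▸ h2)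
    exact ⟨(mem_filter.mp (this ▸ mem_insert_self _ _)).1,
      (mem_filter.mp (this ▸ mem_insert_of_mem (mem_singleton_self _))).1⟩
  · refine hpair ▸ card_le_card fun u hu => ?_
    rcases mem_insert.mp hu with rfl | hu
    · exact mem_filter.mpr ⟨ha, cayley₂_sub_left _⟩
    · obtain rfl := mem_singleton.mp hu
      exact mem_filter.mpr ⟨hb, cayley₂_sub_right _⟩

theorem actStep_cayley₂_eq [DecidableEq G] (hab : a ≠ b) (S : Finset G) :
    actStep (cayley₂ a b) 2 S = S ∪ univ.filter fun v => v - a ∈ S ∧ v - b ∈ S := by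
  ext v
  simp [mem_actStep_cayley₂_iff hab]

variable {g : ℕ} (hab : a ≠ b) (hg : ∀ l, hasCycle (cayley₂ a b) l → g ≤ l)
include hab hg

theorem card_lt_card_actStep_cayley₂ {S : Finset G} (hS : Fintype.card G < S.card + g)
    (hne : S ≠ univ) : S.card < (actStep (cayley₂ a b) 2 S).card := by
  classical
  obtain ⟨v, hvS, hv⟩ := exists_forall_pred_mem_of_card_compl_lt hg
    (by rw [card_compl]; have := card_le_univ S; omega) hne
  refine card_lt_card ⟨subset_actStep, fun h => hvS (h ?_)⟩
  exact (mem_actStep_cayley₂_iff hab).mpr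
    (Or.inr ⟨hv _ (cayley₂_sub_left v), hv _ (cayley₂_sub_right v)⟩)

theorem activeSets_cayley₂_eq_univ {n : ℕ} {S : Finset G} (hS : Fintype.card G < S.card + g)
    (hn : Fintype.card G ≤ S.card + n) : activeSets (cayley₂ a b) 2 S n = univ := by
  induction n generalizing S with
  | zero => exact eq_univ_of_card S (le_antisymm (card_le_univ S) hn)
  | succ n ih =>
    by_cases hne : S = univ
    · exact univ_subset_iff.mp (hne ▸ subset_activeSets _)
    have hlt := card_lt_card_actStep_cayley₂ hab hg hS hne
    rw [activeSets_succ]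
    exact ih (by omega) (by omega)

end Cayley

section ZMod11

theorem six_le_of_hasCycle_cayley₂ {l : ℕ} (h : hasCycle (cayley₂ (1 : ZMod 11) 6) l) : 6 ≤ l := by
  obtain ⟨j, k, rfl, hjk⟩ := h.exists_nsmul_add_nsmul_eq_zero
  have : 11 ∣ j + 6 * k := by
    rw [← ZMod.natCast_eq_zero_iff]
    simpa [nsmul_eq_mul, mul_comm] using hjk
  have := h.1
  by_contra! hlt
  have : k < 6 := by omega
  interval_cases k <;> omega

def lowerSegment (k : ℕ) : Finset (ZMod 11) := univ.filter fun x => x.val < k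

theorem card_lowerSegment {k : ℕ} (hk : k ≤ 11) : (lowerSegment k).card = k := by
  interval_cases k <;> decide

theorem actStep_lowerSegment {k : ℕ} (hk6 : 6 ≤ k) (hk : k ≤ 10) :
    actStep (cayley₂ (1 : ZMod 11) 6) 2 (lowerSegment k) = lowerSegment (k + 1) := by
  rw [actStep_cayley₂_eq (by decide)]
  interval_cases k <;> decide

theorem activeSets_lowerSegment {k n : ℕ} (hk6 : 6 ≤ k) (hkn : k + n ≤ 11) :
    activeSets (cayley₂ (1 : ZMod 11) 6) 2 (lowerSegment k) n = lowerSegment (k + n) := by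
  induction n generalizing k with
  | zero => rfl
  | succ n ih =>
    rw [activeSets_succ, actStep_lowerSegment hk6 (by omega), ih (by omega) (by omega),
      Nat.add_right_comm k 1 n, add_assoc]

end ZMod11

/-- In `Cay(C₁₁, {a, a⁶})` the girth is `6`; with threshold `t = 2 = |H|`,
`d_{s,2} = 11 - s` for all `s > 5`. -/
theorem stmt_17 :
    (hasCycle (fun x y : ZMod 11 => y = 1 + x ∨ y = 6 + x) 6 ∧
      ∀ l, hasCycle (fun x y : ZMod 11 => y = 1 + x ∨ y = 6 + x) l → 6 ≤ l) ∧
    ∀ s : ℕ, 5 < s → s ≤ 11 →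
      higherDiam (fun x y : ZMod 11 => y = 1 + x ∨ y = 6 + x) 2 s =
        ((11 - s : ℕ) : ℕ∞) := by
  have hgirth : ∀ l, hasCycle (cayley₂ (1 : ZMod 11) 6) l → 6 ≤ l :=
    fun _ => six_le_of_hasCycle_cayley₂
  refine ⟨⟨⟨by norm_num, fun i : ZMod 6 => ![0, 6, 7, 8, 9, 10] i, by decide, by decide⟩,
    hgirth⟩, fun s hs5 hs11 => le_antisymm ?_ ?_⟩
  · refine higherDiam_le_iff.mpr fun S hS =>
      activeSets_cayley₂_eq_univ (by decide) hgirth ?_ ?_ <;> simp only [ZMod.card, hS] <;> omega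
  obtain rfl | hs10 : s = 11 ∨ s ≤ 10 := by omega
  · simp
  have hstuck : activeSets (cayley₂ (1 : ZMod 11) 6) 2 (lowerSegment s) (10 - s) ≠ univ := by
    rw [activeSets_lowerSegment (by omega) (by omega), Nat.add_sub_cancel' hs10]
    decide
  rw [show 11 - s = 10 - s + 1 by omega, Nat.cast_succ]
  exact Order.add_one_le_of_lt (lt_higherDiam (card_lowerSegment hs11) hstuck)
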